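/- arXiv:1709.01278 — 3 statements merged into one kernel-verified Lean document; each statement's English description precedes it below -/
import Mathlib

section
/- Let D be a finite-dimensional division algebra over a field k, and let k(q) be the field of rational functions in one variable over k. Then D ⊗_k k(q) is a division algebra over k(q). -/
/-!
Write `K = k(q)`. The algebra `K ⊗[k] D` is the localization of `k[q] ⊗[k] D ≃ D[q]` at the
nonzero polynomials, which act centrally, and `D[q]` has no zero divisors. A central localization
of a ring without zero divisors has none: clear the denominators of `x` and `y` in `x * y = 0`.
Being finite-dimensional over `K` and without zero divisors, `K ⊗[k] D` is a division algebra.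
-/

open scoped TensorProduct nonZeroDivisors Polynomial

theorem IsLocalizedModule.noZeroDivisors_of_algHom {R B B' : Type*} [CommRing R] [Ring B]
    [Ring B'] [Algebra R B] [Algebra R B'] (S : Submonoid R) (f : B →ₐ[R] B')
    [IsLocalizedModule S f.toLinearMap] (hf : Function.Injective f) [NoZeroDivisors B] :
    NoZeroDivisors B' := by
  refine ⟨fun {x y} hxy => ?_⟩
  obtain ⟨⟨t, s⟩, hx : s • x = f t⟩ := IsLocalizedModule.surj S f.toLinearMap x
  obtain ⟨⟨t', s'⟩, hy : s' • y = f t'⟩ := IsLocalizedModule.surj S f.toLinearMap y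
  have htt' : t * t' = 0 := hf <| by
    rw [map_mul, map_zero, ← hx, ← hy, smul_mul_smul_comm, hxy, smul_zero]
  have eq_zero_of_smul_eq_zero {s : S} {z : B'} (hz : s • z = 0) : z = 0 :=
    IsLocalizedModule.smul_injective f.toLinearMap s (by simpa using hz)
  rcases mul_eq_zero.mp htt' with ht | ht'
  · exact .inl <| eq_zero_of_smul_eq_zero <| by rw [hx, ht, map_zero]
  · exact .inr <| eq_zero_of_smul_eq_zero <| by rw [hy, ht', map_zero]

namespace Algebra.TensorProduct

variable {k R K : Type*} (A : Type*) [CommRing k] [CommRing R] [CommRing K] [Ring A]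
  [Algebra k R] [Algebra R K] [Algebra k K] [IsScalarTower k R K] [Algebra k A]

instance isLocalizedModule_map_ofId (S : Submonoid R) [IsLocalization S K] :
    IsLocalizedModule S (map (Algebra.ofId R K) (AlgHom.id k A)).toLinearMap := by
  have : (map (Algebra.ofId R K) (AlgHom.id k A)).toLinearMap =
      TensorProduct.AlgebraTensorModule.rTensor k A (Algebra.linearMap R K) := by
    ext; rfl
  rw [this]
  infer_instance

theorem map_ofId_injective [Module.Flat k A] (h : Function.Injective (algebraMap R K)) :
    Function.Injective (map (Algebra.ofId R K) (AlgHom.id k A)) :=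
  Module.Flat.rTensor_preserves_injective_linearMap ((Algebra.linearMap R K).restrictScalars k) h

end Algebra.TensorProduct

theorem noZeroDivisors_of_forall_isUnit {D : Type*} [Ring D] (hD : ∀ d : D, d ≠ 0 → IsUnit d) :
    NoZeroDivisors D where
  eq_zero_or_eq_zero_of_mul_eq_zero {a _} hab :=
    or_iff_not_imp_left.mpr fun ha => (hD a ha).mul_right_eq_zero.mp hab

instance Polynomial.noZeroDivisors_tensorProduct {k A : Type*} [CommRing k] [Ring A]
    [Algebra k A] [NoZeroDivisors A] : NoZeroDivisors (k[X] ⊗[k] A) :=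
  MulEquiv.noZeroDivisors A[X]
    ((Algebra.TensorProduct.comm k k[X] A).trans (polyEquivTensor k A).symm : k[X] ⊗[k] A ≃* A[X])

/-- If `D` is a finite-dimensional division algebra over a field `k`
(an associative unital `k`-algebra in which every nonzero element is invertible),
then `D ⊗_k k(q)` is a division algebra over the rational function field `k(q)`. -/
theorem baseChange_ratFunc_divisionAlgebra
    (k D : Type) [Field k] [Ring D] [Nontrivial D] [Algebra k D]
    [FiniteDimensional k D]
    (hD : ∀ d : D, d ≠ 0 → IsUnit d) :
    Nontrivial (D ⊗[k] RatFunc k) ∧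
      ∀ x : D ⊗[k] RatFunc k, x ≠ 0 → IsUnit x := by
  have := noZeroDivisors_of_forall_isUnit hD
  have : NoZeroDivisors (RatFunc k ⊗[k] D) :=
    IsLocalizedModule.noZeroDivisors_of_algHom k[X]⁰ _
      (Algebra.TensorProduct.map_ofId_injective D (RatFunc.algebraMap_injective k))
  have : Nontrivial (RatFunc k ⊗[k] D) :=
    Algebra.TensorProduct.nontrivial_of_algebraMap_injective_of_flat_right k _ D
      (algebraMap k (RatFunc k)).injective
  have : IsDomain (RatFunc k ⊗[k] D) := NoZeroDivisors.to_isDomain _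
  let e := (Algebra.TensorProduct.comm k D (RatFunc k)).toRingEquiv
  refine ⟨e.toEquiv.nontrivial, fun x hx => ?_⟩
  rw [← MulEquiv.isUnit_map e]
  exact FiniteDimensional.isUnit (RatFunc k) (e.map_ne_zero_iff.mpr hx)
end

section
/- In the setting of the FRT-type Hopf algebra A generated by entries of T and T^{-1} with relations R T_1 T_2 = T_2 T_1 R and T T^{-1} = T^{-1} T = 1 (R the image of the R-matrix of a quasitriangular Hopf algebra U on V ⊗ V), the following identity holds in End(V) ⊗ A: writing T = Σ_k c_k ⊗ t_k and T^{-1} = Σ_i c'_i ⊗ t'_i, one has Σ_{i,k} c'_i u c_k u^{-1} ⊗ t_k t'_i = 1 ⊗ 1, where u ∈ End(V) is the image of the Drinfeld element. -/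
open scoped TensorProduct

section FRT

variable (k : Type) [Field k] (n : ℕ)

/-- Generators: `Sum.inl (i,j)` is `t_{ij}`, `Sum.inr (i,j)` is `t̃_{ij}`. -/
abbrev FRTGen (n : ℕ) := (Fin n × Fin n) ⊕ (Fin n × Fin n)

/-- The defining relations of the FRT-type algebra: `R T₁ T₂ = T₂ T₁ R` and
`T T̃ = 1 = T̃ T`. -/
inductive FRTRel (R : Matrix (Fin n × Fin n) (Fin n × Fin n) k) :
    FreeAlgebra k (FRTGen n) → FreeAlgebra k (FRTGen n) → Prop
  | rtt (i j m l : Fin n) : FRTRel R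
      (∑ a : Fin n, ∑ b : Fin n, R (i, j) (a, b) •
        (FreeAlgebra.ι k (Sum.inl (a, m) : FRTGen n) *
          FreeAlgebra.ι k (Sum.inl (b, l) : FRTGen n)))
      (∑ a : Fin n, ∑ b : Fin n, R (a, b) (m, l) •
        (FreeAlgebra.ι k (Sum.inl (j, b) : FRTGen n) *
          FreeAlgebra.ι k (Sum.inl (i, a) : FRTGen n)))
  | inv₁ (i j : Fin n) : FRTRel R
      (∑ a : Fin n, FreeAlgebra.ι k (Sum.inl (i, a) : FRTGen n) *
        FreeAlgebra.ι k (Sum.inr (a, j) : FRTGen n))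
      (if i = j then 1 else 0)
  | inv₂ (i j : Fin n) : FRTRel R
      (∑ a : Fin n, FreeAlgebra.ι k (Sum.inr (i, a) : FRTGen n) *
        FreeAlgebra.ι k (Sum.inl (a, j) : FRTGen n))
      (if i = j then 1 else 0)

/-- The FRT-type algebra `A` generated by the `t_{ij}` and `t̃_{ij}`. -/
abbrev FRTAlg (R : Matrix (Fin n × Fin n) (Fin n × Fin n) k) := RingQuot (FRTRel k n R)

variable (R : Matrix (Fin n × Fin n) (Fin n × Fin n) k)

/-- The generator `t_{ij}` of the FRT algebra. -/
def tGen (i j : Fin n) : FRTAlg k n R :=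
  RingQuot.mkAlgHom k (FRTRel k n R) (FreeAlgebra.ι k (Sum.inl (i, j) : FRTGen n))

/-- The generator `t̃_{ij}` of the FRT algebra. -/
def ttGen (i j : Fin n) : FRTAlg k n R :=
  RingQuot.mkAlgHom k (FRTRel k n R) (FreeAlgebra.ι k (Sum.inr (i, j) : FRTGen n))

/-- The product of two elements of `End(V)ᵒᵖ ⊗ End(V)` in terms of their matrices of
"components": an operator `X` on `V ⊗ V` has components `X_{(ik),(jl)}`, and the
product in `End(V)ᵒᵖ ⊗ End(V)` is
`(X ⋆ Y)_{(ik),(jl)} = ∑_{m,p} X_{(mk),(jp)} Y_{(im),(pl)}`. -/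
def opMul (X Y : Matrix (Fin n × Fin n) (Fin n × Fin n) k) :
    Matrix (Fin n × Fin n) (Fin n × Fin n) k :=
  fun p q => ∑ m : Fin n, ∑ l : Fin n, X (m, p.2) (q.1, l) * Y (p.1, m) (l, q.2)

/-- The element `u = ∑ q_i p_i ∈ End(V)` built out of the inverse `∑ p_i ⊗ q_i` of
`R` in `End(V)ᵒᵖ ⊗ End(V)`, in matrix components. -/
def uMat (P : Matrix (Fin n × Fin n) (Fin n × Fin n) k) : Matrix (Fin n) (Fin n) k :=
  fun a b => ∑ m : Fin n, P (m, a) (b, m)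

/-!
Slicing `R T₁ T₂ = T₂ T₁ R` at fixed outer indices gives a matrix identity `D T = T E`, and
conjugating by the invertible `T` turns it into the mixed relation `T̃ D = E T̃`. Contracting that
against `u`, which satisfies `∑ R_{(i,j),(a,γ)} u_{iγ} = δ_{ja}`, shows that `X = Tᵗ u T̃ᵗ`
satisfies `∑ R_{(a,β),(m,l)} X_{al} = δ_{βm}`, and contracting once more with the inverse `P` of
`R` forces `X = uᵗ`. The same contraction applied to `u` itself shows that `u` is symmetric, so
`Tᵗ u T̃ᵗ = u`, and multiplying by `u⁻¹` gives the identity.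
-/

theorem sum_sum_sum_sum_comm {M ι κ : Type*} [AddCommMonoid M] [Fintype ι] [Fintype κ]
    (f : ι → ι → κ → κ → M) :
    ∑ a, ∑ b, ∑ c, ∑ d, f a b c d = ∑ c, ∑ d, ∑ a, ∑ b, f a b c d :=
  calc _ = ∑ p : ι × ι, ∑ q : κ × κ, f p.1 p.2 q.1 q.2 := by simp only [Fintype.sum_prod_type]
    _ = ∑ q : κ × κ, ∑ p : ι × ι, f p.1 p.2 q.1 q.2 := Finset.sum_comm
    _ = _ := by simp only [Fintype.sum_prod_type]

section RTT

variable {K A ι : Type*} [CommSemiring K] [Semiring A] [Algebra K A] [Fintype ι] [DecidableEq ι]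

/- The `(i, m)` slice of `R T₁ T₂ = T₂ T₁ R`, as a matrix identity in the remaining indices
`(j, l)`, reads `rttLeft R t i m * t = t * rttRight R t i m`. -/
def rttLeft (R : Matrix (ι × ι) (ι × ι) K) (t : Matrix ι ι A) (i m : ι) : Matrix ι ι A :=
  Matrix.of fun j b => ∑ a, R (i, j) (a, b) • t a m

def rttRight (R : Matrix (ι × ι) (ι × ι) K) (t : Matrix ι ι A) (i m : ι) : Matrix ι ι A :=
  Matrix.of fun b l => ∑ a, R (a, b) (m, l) • t i a

def sandwich (u : Matrix ι ι K) (t t' : Matrix ι ι A) : Matrix ι ι A :=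
  Matrix.of fun a l => ∑ i, ∑ γ, u i γ • (t i a * t' l γ)

variable {R : Matrix (ι × ι) (ι × ι) K} {T : (Matrix ι ι A)ˣ}

theorem inv_mul_rttLeft {i m : ι}
    (h : rttLeft R T.val i m * T.val = T.val * rttRight R T.val i m) :
    T.inv * rttLeft R T.val i m = rttRight R T.val i m * T.inv :=
  SemiconjBy.units_inv_symm_left h.symm

variable {u : Matrix ι ι K}

theorem sum_smul_rttLeft
    (hu : ∀ j a, ∑ i, ∑ γ, R (i, j) (a, γ) * u i γ = if j = a then 1 else 0)
    (t : Matrix ι ι A) (j m : ι) :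
    ∑ i, ∑ γ, u i γ • rttLeft R t i m j γ = t j m := by
  simp only [rttLeft, Matrix.of_apply, Finset.smul_sum, smul_smul]
  rw [Finset.sum_comm_cycle]
  simp only [← Finset.sum_smul, mul_comm (u _ _), hu, ite_smul, one_smul, zero_smul,
    Finset.sum_ite_eq, Finset.mem_univ, if_true]

theorem sum_R_smul_sandwich
    (hu : ∀ j a, ∑ i, ∑ γ, R (i, j) (a, γ) * u i γ = if j = a then 1 else 0)
    (hRTT : ∀ i m, rttLeft R T.val i m * T.val = T.val * rttRight R T.val i m) (β m : ι) :
    ∑ a, ∑ l, R (a, β) (m, l) • sandwich u T.val T.inv a l = if β = m then 1 else 0 :=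
  calc ∑ a, ∑ l, R (a, β) (m, l) • sandwich u T.val T.inv a l
      = ∑ i, ∑ γ, u i γ • (rttRight R T.val i m * T.inv) β γ := by
        simp only [sandwich, rttRight, Matrix.mul_apply, Matrix.of_apply, Finset.smul_sum,
          Finset.sum_mul, smul_mul_assoc, smul_smul]
        rw [sum_sum_sum_sum_comm]
        refine Finset.sum_congr rfl fun i _ => Finset.sum_congr rfl fun γ _ => ?_
        rw [Finset.sum_comm]
        simp only [mul_comm]
    _ = ∑ i, ∑ γ, u i γ • (T.inv * rttLeft R T.val i m) β γ := by
        simp only [inv_mul_rttLeft (hRTT _ _)]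
    _ = ∑ j, T.inv β j * ∑ i, ∑ γ, u i γ • rttLeft R T.val i m j γ := by
        simp only [Matrix.mul_apply, Finset.smul_sum, Finset.mul_sum, mul_smul_comm]
        exact Finset.sum_comm_cycle
    _ = (T.inv * T.val) β m := by simp only [sum_smul_rttLeft hu, Matrix.mul_apply]
    _ = if β = m then 1 else 0 := by rw [T.inv_val, Matrix.one_apply]

end RTT

def frtT : (Matrix (Fin n) (Fin n) (FRTAlg k n R))ˣ where
  val := Matrix.of (tGen k n R)
  inv := Matrix.of (ttGen k n R)
  val_inv := by
    ext i j
    simpa [tGen, ttGen, Matrix.mul_apply, Matrix.one_apply, apply_ite (RingQuot.mkAlgHom k _)]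
      using RingQuot.mkAlgHom_rel k (FRTRel.inv₁ (R := R) i j)
  inv_val := by
    ext i j
    simpa [tGen, ttGen, Matrix.mul_apply, Matrix.one_apply, apply_ite (RingQuot.mkAlgHom k _)]
      using RingQuot.mkAlgHom_rel k (FRTRel.inv₂ (R := R) i j)

theorem frtT_rtt (i m : Fin n) :
    rttLeft R (frtT k n R).val i m * (frtT k n R).val =
      (frtT k n R).val * rttRight R (frtT k n R).val i m := by
  ext j l
  have h := RingQuot.mkAlgHom_rel k (FRTRel.rtt (R := R) i j m l)
  simp only [map_sum, map_smul, map_mul] at h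
  simp only [rttLeft, rttRight, frtT, Matrix.mul_apply, Matrix.of_apply, Finset.sum_mul,
    Finset.mul_sum, smul_mul_assoc, mul_smul_comm]
  exact Finset.sum_comm.trans (h.trans Finset.sum_comm)

section

variable {k n R}

theorem sum_R_mul_uMat {P : Matrix (Fin n × Fin n) (Fin n × Fin n) k}
    (hRP : opMul k n R P = 1) (j a : Fin n) :
    ∑ i, ∑ γ, R (i, j) (a, γ) * uMat k n P i γ = if j = a then 1 else 0 := by
  have h α := congrFun₂ hRP (α, j) (a, α)
  simp only [opMul, Matrix.one_apply, Prod.mk.injEq] at h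
  simp only [uMat, Finset.mul_sum]
  rw [Finset.sum_comm_cycle]
  simp only [h, ite_and, Finset.sum_ite_eq', Finset.mem_univ, if_true]

theorem eq_uMat_smul_of_sum_R_smul {P : Matrix (Fin n × Fin n) (Fin n × Fin n) k}
    (hPR : opMul k n P R = 1) {M : Type*} [AddCommMonoid M] [Module k M]
    (X : Matrix (Fin n) (Fin n) M) (x₀ : M)
    (hX : ∀ β m, ∑ a, ∑ l, R (a, β) (m, l) • X a l = if β = m then x₀ else 0) (a l : Fin n) :
    X a l = uMat k n P l a • x₀ := by
  have h a' l' := congrFun₂ hPR (a', l) (a, l')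
  simp only [opMul, Matrix.one_apply, Prod.mk.injEq] at h
  calc X a l = ∑ a', ∑ l', (∑ β, ∑ m, P (β, l) (a, m) * R (a', β) (m, l')) • X a' l' := by
        simp only [h, ite_and, ite_smul, one_smul, zero_smul, Finset.sum_ite_irrel,
          Finset.sum_ite_eq, Finset.sum_ite_eq', Finset.mem_univ, if_true, Finset.sum_const_zero]
    _ = ∑ β, ∑ m, P (β, l) (a, m) • ∑ a', ∑ l', R (a', β) (m, l') • X a' l' := by
        simp only [Finset.sum_smul, Finset.smul_sum, smul_smul]
        exact sum_sum_sum_sum_comm _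
    _ = uMat k n P l a • x₀ := by
        simp only [hX, smul_ite, smul_zero, Finset.sum_ite_eq, Finset.mem_univ, if_true, uMat,
          Finset.sum_smul]

theorem uMat_isSymm {P : Matrix (Fin n × Fin n) (Fin n × Fin n) k}
    (hPR : opMul k n P R = 1) (hRP : opMul k n R P = 1) : (uMat k n P).IsSymm := by
  ext a l
  simpa using eq_uMat_smul_of_sum_R_smul hPR (uMat k n P) 1 (sum_R_mul_uMat hRP) l a

end

theorem frt_uTuinv_right_inverse
    (P : Matrix (Fin n × Fin n) (Fin n × Fin n) k)
    (hP : opMul k n P R = 1 ∧ opMul k n R P = 1)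
    (uinv : Matrix (Fin n) (Fin n) k)
    (hu : uMat k n P * uinv = 1 ∧ uinv * uMat k n P = 1) :
    ∀ a b : Fin n,
      (∑ j : Fin n, ∑ c : Fin n, ∑ l : Fin n,
        (uMat k n P j c * uinv l b) • (tGen k n R c l * ttGen k n R a j)) =
      (if a = b then (1 : FRTAlg k n R) else 0) := by
  intro a b
  have hX : ∀ i j, sandwich (uMat k n P) (frtT k n R).val (frtT k n R).inv i j =
      uMat k n P j i • 1 :=
    eq_uMat_smul_of_sum_R_smul hP.1 _ 1
      (sum_R_smul_sandwich (sum_R_mul_uMat hP.2) (frtT_rtt k n R))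
  calc _ = ∑ l, uinv l b • sandwich (uMat k n P) (frtT k n R).val (frtT k n R).inv l a := by
        simp only [sandwich, frtT, Matrix.of_apply, Finset.smul_sum, smul_smul]
        rw [Finset.sum_comm_cycle]
        refine Finset.sum_congr rfl fun l _ => Finset.sum_comm.trans ?_
        refine Finset.sum_congr rfl fun c _ => Finset.sum_congr rfl fun j _ => ?_
        rw [(uMat_isSymm hP.1 hP.2).apply c j, mul_comm]
    _ = ∑ l, (uMat k n P a l * uinv l b) • 1 := by simp only [hX, smul_smul, mul_comm]
    _ = (uMat k n P * uinv) a b • 1 := by rw [Matrix.mul_apply, Finset.sum_smul]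
    _ = _ := by rw [hu.1, Matrix.one_apply, ite_smul, one_smul, zero_smul]

end FRT
end

section
/- Let A be an Ore domain (e.g., a Noetherian domain) that is an algebra over a commutative Noetherian domain R with fraction field F, and let K be a finitely generated module over a strongly left Noetherian locally finite N-filtered R-algebra O such that K ⊗_R F = 0. Then there exists a nonzero f ∈ R such that K[1/f] = 0, i.e., K is annihilated after inverting f. -/
open scoped TensorProduct

theorem Module.isTorsion'_of_subsingleton_tensor {R A M : Type*} [CommSemiring R]
    [CommSemiring A] [Algebra R A] [AddCommMonoid M] [Module R M] (S : Submonoid R)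
    [IsLocalization S A] [Subsingleton (A ⊗[R] M)] : Module.IsTorsion' M S := fun m => by
  obtain ⟨r, hr, hrm⟩ :=
    (IsLocalizedModule.subsingleton_iff S (TensorProduct.mk R A M 1)).mp ‹_› m
  exact ⟨⟨r, hr⟩, hrm⟩

/-- Since `R` acts centrally, the kernel of `s • ·` is an `O`-submodule, so the product of
annihilators of finitely many `O`-generators annihilates all of `K`. -/
theorem Module.IsTorsion'.exists_isTorsionBy_of_finite {R : Type*} (O : Type*) {K : Type*}
    [CommSemiring R] [Semiring O] [Algebra R O] [AddCommMonoid K] [Module R K] [Module O K]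
    [IsScalarTower R O K] [Module.Finite O K] {S : Submonoid R} (hK : Module.IsTorsion' K S) :
    ∃ s : S, Module.IsTorsionBy R K s := by
  classical
  obtain ⟨T, hT⟩ := Module.Finite.fg_top (R := O) (M := K)
  choose a ha using fun k : K => @hK k
  refine ⟨∏ k ∈ T, a k, fun k => ?_⟩
  have hspan : Submodule.span O (T : Set K) ≤
      LinearMap.ker (((∏ k ∈ T, a k : S) : R) • LinearMap.id : K →ₗ[O] K) := by
    refine Submodule.span_le.mpr fun x hx => ?_
    rw [SetLike.mem_coe, LinearMap.mem_ker, LinearMap.smul_apply, LinearMap.id_apply,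
      ← Submonoid.smul_def, ← Finset.prod_erase_mul _ _ hx, mul_smul, ha, smul_zero]
  exact hspan (hT ▸ Submodule.mem_top)

theorem generically_zero_of_torsion_general
    (R : Type) [CommRing R] [IsDomain R]
    (O : Type) [Ring O] [Algebra R O]
    (K : Type) [AddCommGroup K] [Module R K] [Module O K]
    [IsScalarTower R O K] [Module.Finite O K]
    (hKF : Subsingleton ((FractionRing R) ⊗[R] K)) :
    ∃ f : R, f ≠ 0 ∧
      ∀ x : LocalizedModule (Submonoid.powers f) K, x = 0 := by
  obtain ⟨⟨f, hf⟩, hfK⟩ :=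
    (Module.isTorsion'_of_subsingleton_tensor (A := FractionRing R) (M := K)
      (nonZeroDivisors R)).exists_isTorsionBy_of_finite O
  have : Subsingleton (LocalizedModule (Submonoid.powers f) K) :=
    LocalizedModule.subsingleton_iff.mpr fun k => ⟨f, Submonoid.mem_powers f, @hfK k⟩
  exact ⟨f, nonZeroDivisors.ne_zero hf, fun x => Subsingleton.elim x 0⟩

/-- Artin–Small–Zhang generic freeness, as used in the paper: Let `R`
be a commutative Noetherian domain with fraction field `F`, and let `O` be an
`ℕ`-filtered `R`-algebra which is locally finite (each filtration piece is a
finitely generated `R`-module) and strongly left Noetherian (`C ⊗_R O` is left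
Noetherian for every commutative Noetherian `R`-algebra `C`).  If `K` is a finitely
generated left `O`-module with `K ⊗_R F = 0`, then there is a nonzero `f ∈ R` such
that `K[1/f] = 0`. -/
theorem generically_zero_of_torsion
    (R : Type) [CommRing R] [IsDomain R] [IsNoetherianRing R]
    (O : Type) [Ring O] [Algebra R O]
    -- an `ℕ`-filtration of `O` by `R`-submodules
    (Fil : ℕ → Submodule R O)
    (hmono : Monotone Fil)
    (hexh : ∀ x : O, ∃ m : ℕ, x ∈ Fil m)
    (hone : (1 : O) ∈ Fil 0)
    (hmul : ∀ (m l : ℕ), ∀ x ∈ Fil m, ∀ y ∈ Fil l, x * y ∈ Fil (m + l))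
    -- local finiteness of the filtration
    (hlocfin : ∀ m : ℕ, (Fil m).FG)
    -- strong left Noetherianity of `O` over `R`
    (hstrong : ∀ (C : Type) [CommRing C] [Algebra R C],
      IsNoetherianRing C → IsNoetherianRing (C ⊗[R] O))
    (K : Type) [AddCommGroup K] [Module R K] [Module O K]
    [IsScalarTower R O K] [Module.Finite O K]
    (hKF : Subsingleton ((FractionRing R) ⊗[R] K)) :
    ∃ f : R, f ≠ 0 ∧
      ∀ x : LocalizedModule (Submonoid.powers f) K, x = 0 :=
  generically_zero_of_torsion_general R O K hKF
end
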